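/- arXiv:1207.2110 — 2 statements merged into one kernel-verified Lean document; each statement's English description precedes it below -/
import Mathlib

section
/- Let a, b ∈ ℂ. The power series C(φ) = Σ_{n=0}^∞ (φⁿ/n!)·aₙ and S(φ) = Σ_{n=0}^∞ (φⁿ/n!)·bₙ converge absolutely for every φ ∈ ℂ, where (aₙ), (bₙ) are defined by a₀ = 1, b₀ = 0, a₁ = 0, b₁ = 1, a_{n+1} = a·bₙ, b_{n+1} = aₙ + b·bₙ. Moreover, if h ∈ ℂ satisfies h² = a + b·h, then exp(h·φ) = C(φ) + h·S(φ) for all φ ∈ ℂ. -/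
theorem stmt_3 (a b : ℂ)
    (A B : ℕ → ℂ) (hA0 : A 0 = 1) (hB0 : B 0 = 0) (hA1 : A 1 = 0) (hB1 : B 1 = 1)
    (hrec : ∀ n : ℕ, A (n + 1) = a * B n ∧ B (n + 1) = A n + b * B n) :
    (∀ φ : ℂ, Summable (fun n : ℕ => ‖φ ^ n / n.factorial * A n‖) ∧
        Summable (fun n : ℕ => ‖φ ^ n / n.factorial * B n‖)) ∧
      ∀ h : ℂ, h ^ 2 = a + b * h →
        ∀ φ : ℂ, Complex.exp (h * φ) =
          (∑' n : ℕ, φ ^ n / n.factorial * A n) + h * ∑' n : ℕ, φ ^ n / n.factorial * B n := by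
  set K : ℝ := ‖a‖ + ‖b‖ + 1 with hK
  have hK1 : (1 : ℝ) ≤ K := by have := norm_nonneg a; have := norm_nonneg b; simp only [hK]; linarith
  have hbound : ∀ n, ‖A n‖ ≤ K ^ n ∧ ‖B n‖ ≤ K ^ n := by
    intro n
    induction n with
    | zero => simp [hA0, hB0]
    | succ n ih =>
      obtain ⟨hAn, hBn⟩ := ih
      constructor
      · rw [(hrec n).1]
        calc ‖a * B n‖ = ‖a‖ * ‖B n‖ := norm_mul _ _
          _ ≤ K * K ^ n := by
              apply mul_le_mul (by have := norm_nonneg b; simp only [hK]; linarith) hBn (norm_nonneg _) (by linarith)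
          _ = K ^ (n + 1) := (pow_succ' K n).symm
      · rw [(hrec n).2]
        calc ‖A n + b * B n‖ ≤ ‖A n‖ + ‖b‖ * ‖B n‖ := by
              apply (norm_add_le _ _).trans; rw [norm_mul]
          _ ≤ K ^ n + ‖b‖ * K ^ n := by
              gcongr
          _ = (1 + ‖b‖) * K ^ n := by ring
          _ ≤ K * K ^ n := by
              gcongr; have := norm_nonneg a; simp only [hK]; linarith
          _ = K ^ (n + 1) := (pow_succ' K n).symm
  have hsum : ∀ (φ : ℂ) (F : ℕ → ℂ), (∀ n, ‖F n‖ ≤ K ^ n) →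
      Summable (fun n : ℕ => ‖φ ^ n / n.factorial * F n‖) := by
    intro φ F hF
    apply Summable.of_nonneg_of_le (fun n => norm_nonneg _)
      (f := fun n => (K * ‖φ‖) ^ n / n.factorial)
    · intro n
      rw [norm_mul, norm_div, norm_pow, mul_pow]
      have : ‖((n.factorial : ℂ))‖ = (n.factorial : ℝ) := by
        simp
      rw [this]
      rw [div_mul_eq_mul_div, div_le_div_iff_of_pos_right (by positivity)]
      calc ‖φ‖ ^ n * ‖F n‖ ≤ ‖φ‖ ^ n * K ^ n := by
            gcongr; exact hF n
        _ = K ^ n * ‖φ‖ ^ n := by ring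
    · exact Real.summable_pow_div_factorial _
  constructor
  · intro φ
    exact ⟨hsum φ A (fun n => (hbound n).1), hsum φ B (fun n => (hbound n).2)⟩
  · intro h hh φ
    have hpow : ∀ n, h ^ n = A n + h * B n := by
      intro n
      induction n with
      | zero => simp [hA0, hB0]
      | succ n ih =>
        rw [pow_succ, ih, (hrec n).1, (hrec n).2]
        ring_nf
        rw [hh]
        ring
    have hsA : Summable (fun n : ℕ => φ ^ n / n.factorial * A n) :=
      Summable.of_norm (hsum φ A (fun n => (hbound n).1))
    have hsB : Summable (fun n : ℕ => φ ^ n / n.factorial * B n) :=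
      Summable.of_norm (hsum φ B (fun n => (hbound n).2))
    have hexp : Complex.exp (h * φ) = ∑' n : ℕ, (h * φ) ^ n / n.factorial := by
      rw [Complex.exp_eq_exp_ℂ, NormedSpace.exp_eq_tsum_div]
    rw [hexp]
    have : ∀ n : ℕ, (h * φ) ^ n / n.factorial
        = φ ^ n / n.factorial * A n + h * (φ ^ n / n.factorial * B n) := by
      intro n
      rw [mul_pow, mul_comm (h^n), mul_div_assoc, hpow n]
      ring
    rw [tsum_congr this, Summable.tsum_add hsA (hsB.mul_left h), tsum_mul_left]
end

section
/- Let a, b ∈ ℂ and let C(φ) = Σ_{n=0}^∞ (φⁿ/n!)·aₙ, S(φ) = Σ_{n=0}^∞ (φⁿ/n!)·bₙ, where (aₙ), (bₙ) are defined by a₀ = 1, b₀ = 0, a₁ = 0, b₁ = 1, a_{n+1} = a·bₙ, b_{n+1} = aₙ + b·bₙ. Then C and S are differentiable on ℂ and satisfy the differential equations C′(φ) = a·S(φ) and S′(φ) = C(φ) + b·S(φ) for all φ ∈ ℂ. -/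
open NormedSpace

theorem stmt_4 (a b : ℂ)
    (A B : ℕ → ℂ) (hA0 : A 0 = 1) (hB0 : B 0 = 0) (hA1 : A 1 = 0) (hB1 : B 1 = 1)
    (hrec : ∀ n : ℕ, A (n + 1) = a * B n ∧ B (n + 1) = A n + b * B n)
    (C S : ℂ → ℂ)
    (hC : ∀ φ : ℂ, C φ = ∑' n : ℕ, φ ^ n / n.factorial * A n)
    (hS : ∀ φ : ℂ, S φ = ∑' n : ℕ, φ ^ n / n.factorial * B n) :
    ∀ φ : ℂ, HasDerivAt C (a * S φ) φ ∧ HasDerivAt S (C φ + b * S φ) φ := by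
  letI : SeminormedRing (Matrix (Fin 2) (Fin 2) ℂ) := Matrix.linftyOpSemiNormedRing
  letI : NormedRing (Matrix (Fin 2) (Fin 2) ℂ) := Matrix.linftyOpNormedRing
  letI : NormedAlgebra ℂ (Matrix (Fin 2) (Fin 2) ℂ) := Matrix.linftyOpNormedAlgebra
  set M : Matrix (Fin 2) (Fin 2) ℂ := !![0, a; 1, b] with hM
  -- entry projection as a continuous linear map
  let eM : ∀ _ _ : Fin 2, Matrix (Fin 2) (Fin 2) ℂ →L[ℂ] ℂ := fun i j =>
    LinearMap.toContinuousLinearMap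
      { toFun := fun X : Matrix (Fin 2) (Fin 2) ℂ => X i j,
        map_add' := fun _ _ => rfl, map_smul' := fun _ _ => rfl }
  have eM_apply : ∀ (i j : Fin 2) (X : Matrix (Fin 2) (Fin 2) ℂ), eM i j X = X i j :=
    fun i j X => rfl
  -- entries of powers of M
  have hpow : ∀ n : ℕ, (M ^ n) 0 0 = A n ∧ (M ^ n) 1 0 = B n := by
    intro n
    induction n with
    | zero => simp [hA0, hB0, Matrix.one_apply]
    | succ n ih =>
      rw [pow_succ']
      constructor
      · rw [Matrix.mul_apply, Fin.sum_univ_two, (hrec n).1]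
        rw [ih.1, ih.2]
        simp [hM]
      · rw [Matrix.mul_apply, Fin.sum_univ_two, (hrec n).2]
        rw [ih.1, ih.2]
        simp [hM]
  -- the entries of exp (φ • M) as sums
  have hEsum : ∀ (φ : ℂ) (i : Fin 2),
      HasSum (fun n : ℕ => ((n.factorial : ℂ))⁻¹ • (((φ • M) ^ n) i 0))
        ((exp (φ • M)) i 0) := by
    intro φ i
    have h2 := ((expSeries_summable' (𝕂 := ℂ) (φ • M)).hasSum).mapL (eM i 0)
    have h3 : exp (φ • M) i 0 = eM i 0 (∑' n : ℕ, ((n.factorial : ℂ))⁻¹ • (φ • M) ^ n) := by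
      rw [eM_apply]; simp only [exp_eq_tsum ℂ]
    rw [h3]
    exact h2
  have hCφ : ∀ φ : ℂ, C φ = (exp (φ • M)) 0 0 := by
    intro φ
    rw [hC φ, ← (hEsum φ 0).tsum_eq]
    refine tsum_congr fun n => ?_
    rw [smul_pow, Matrix.smul_apply, (hpow n).1, smul_eq_mul, smul_eq_mul]
    ring
  have hSφ : ∀ φ : ℂ, S φ = (exp (φ • M)) 1 0 := by
    intro φ
    rw [hS φ, ← (hEsum φ 1).tsum_eq]
    refine tsum_congr fun n => ?_
    rw [smul_pow, Matrix.smul_apply, (hpow n).2, smul_eq_mul, smul_eq_mul]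
    ring
  -- derivative of entries of exp (t • M)
  have hD : ∀ (φ : ℂ) (i : Fin 2),
      HasDerivAt (fun t : ℂ => (exp (t • M)) i 0) ((M * exp (φ • M)) i 0) φ := by
    intro φ i
    have h := hasDerivAt_exp_smul_const' (𝕂 := ℂ) M φ
    have h2 := (eM i 0).hasFDerivAt.comp_hasDerivAt φ h
    exact h2
  have hC' : (fun t : ℂ => (exp (t • M)) 0 0) = C := funext fun t => (hCφ t).symm
  have hS' : (fun t : ℂ => (exp (t • M)) 1 0) = S := funext fun t => (hSφ t).symm
  intro φ
  have hd0 := hD φ 0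
  have hd1 := hD φ 1
  rw [hC'] at hd0
  rw [hS'] at hd1
  have e00 : (M * exp (φ • M)) 0 0 = a * S φ := by
    rw [Matrix.mul_apply, Fin.sum_univ_two, hSφ φ]
    simp [hM]
  have e10 : (M * exp (φ • M)) 1 0 = C φ + b * S φ := by
    rw [Matrix.mul_apply, Fin.sum_univ_two, hSφ φ, hCφ φ]
    simp [hM]
  rw [e00] at hd0
  rw [e10] at hd1
  exact ⟨hd0, hd1⟩
end
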